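/- arXiv:1409.6687 — 2 statements merged into one kernel-verified Lean document; each statement's English description precedes it below -/
import Mathlib

section
/- Let G be a finite dominant set of monomials. Then for every subset L ⊊ G and every m ∈ G \ L, the total degree of lcm(L ∪ {m}) is at least the total degree of lcm(L) plus 1. -/
open Finset

variable {X : Type*} [DecidableEq X]

/-- The lcm of a finite set of monomials (monomials = finitely supported
exponent functions): pointwise maximum of exponents. -/
noncomputable def mlcm (L : Finset (X →₀ ℕ)) : X →₀ ℕ := L.sup id

/-- `m` is dominant with respect to `G`: some variable `x` appears in `m`
with exponent at least `k > 0` while every other element of `G` has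
`x`-exponent `< k`. -/
def Dominant (G : Finset (X →₀ ℕ)) (m : X →₀ ℕ) : Prop :=
  ∃ x : X, ∃ k : ℕ, 0 < k ∧ k ≤ m x ∧ ∀ m' ∈ G, m' ≠ m → m' x < k

/-- Total degree of a monomial: sum of its exponents. -/
def mdeg (m : X →₀ ℕ) : ℕ := m.sum fun _ e => e

omit [DecidableEq X] in
theorem mdeg_eq_degree (m : X →₀ ℕ) : mdeg m = m.degree := rfl

omit [DecidableEq X] in
theorem mdeg_strictMono : StrictMono (mdeg : (X →₀ ℕ) → ℕ) := by
  intro f g hfg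
  obtain ⟨d, rfl⟩ := exists_add_of_le hfg.le
  have hd : d ≠ 0 := by
    rintro rfl
    exact hfg.ne (add_zero f).symm
  have hdeg : 0 < d.degree := Nat.pos_of_ne_zero ((Finsupp.degree_eq_zero_iff d).not.mpr hd)
  rw [mdeg_eq_degree, mdeg_eq_degree, map_add]
  omega

omit [DecidableEq X] in
theorem mlcm_apply (L : Finset (X →₀ ℕ)) (x : X) : mlcm L x = L.sup (· x) :=
  Finset.apply_sup_eq_sup_comp (fun f : X →₀ ℕ => f x) (fun _ _ => Finsupp.sup_apply ..) rfl

theorem mlcm_lt_mlcm_insert_of_dominant {G L : Finset (X →₀ ℕ)} {m : X →₀ ℕ}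
    (hdom : Dominant G m) (hLG : L ⊆ G) (hmL : m ∉ L) : mlcm L < mlcm (insert m L) := by
  obtain ⟨x, k, hk, hkm, hlt⟩ := hdom
  have hLx : mlcm L x < k := by
    rw [mlcm_apply]
    exact (Finset.sup_lt_iff hk).2 fun m' hm' => hlt m' (hLG hm') (ne_of_mem_of_not_mem hm' hmL)
  have hkx : k ≤ mlcm (insert m L) x := hkm.trans (le_sup (f := id) (mem_insert_self m L) x)
  exact Finsupp.lt_def.2 ⟨sup_mono (subset_insert m L), x, hLx.trans_le hkx⟩

theorem mdeg_lcm_insert_of_dominant (G : Finset (X →₀ ℕ))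
    (hdom : ∀ m ∈ G, Dominant G m)
    (L : Finset (X →₀ ℕ)) (hL : L ⊂ G) (m : X →₀ ℕ) (hm : m ∈ G) (hmL : m ∉ L) :
    mdeg (mlcm L) + 1 ≤ mdeg (mlcm (insert m L)) :=
  mdeg_strictMono (mlcm_lt_mlcm_insert_of_dominant (hdom m hm) hL.subset hmL)
end

section
/- Let G = {m₁, …, m_q, n} be a semidominant set of monomials. Then the maximal cardinality r of a dominant subset of G containing n satisfies: for every subset L ⊆ {m₁,…,m_q} with |L| ≥ r, n divides lcm(L). -/
open Finset

variable {X : Type*} [DecidableEq X]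

/-! A monomial that divides no lcm of the others is dominant, and dominance passes to subsets;
so if `n ∤ lcm L` for some `L ⊆ G \ {n}`, then `L ∪ {n}` is a dominant subset of `G` containing
`n`, of size `|L| + 1`, which forces `|L| < r`. -/

theorem le_mlcm {X : Type*} {L : Finset (X →₀ ℕ)} {m : X →₀ ℕ} (hm : m ∈ L) : m ≤ mlcm L :=
  Finset.le_sup (f := id) hm

theorem Dominant.mono {X : Type*} {G H : Finset (X →₀ ℕ)} {m : X →₀ ℕ}
    (h : Dominant G m) (hHG : H ⊆ G) : Dominant H m := by
  obtain ⟨x, k, hk, hkm, hlt⟩ := h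
  exact ⟨x, k, hk, hkm, fun m' hm' => hlt m' (hHG hm')⟩

theorem dominant_of_not_le_mlcm_erase {G : Finset (X →₀ ℕ)} {n : X →₀ ℕ}
    (h : ¬ n ≤ mlcm (G.erase n)) : Dominant G n := by
  obtain ⟨x, hx⟩ : ∃ x, mlcm (G.erase n) x < n x := by
    simpa [Finsupp.le_def] using h
  refine ⟨x, n x, by omega, le_rfl, fun m hm hmn => ?_⟩
  exact (le_mlcm (mem_erase.mpr ⟨hmn, hm⟩) x).trans_lt hx

theorem pd_semidominant_general (G : Finset (X →₀ ℕ)) (n : X →₀ ℕ) (hn : n ∈ G)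
    (hdom : ∀ m ∈ G, m ≠ n → Dominant G m)
    (r : ℕ)
    (hub : ∀ D ⊆ G, n ∈ D → (∀ m ∈ D, Dominant D m) → D.card ≤ r) :
    ∀ L ⊆ G.erase n, r ≤ L.card → n ≤ mlcm L := by
  intro L hL hcard
  by_contra hndvd
  have hnL : n ∉ L := fun h => (ne_of_mem_erase (hL h)) rfl
  have hDG : insert n L ⊆ G := insert_subset hn (hL.trans (erase_subset n G))
  have hDdom : ∀ m ∈ insert n L, Dominant (insert n L) m := by
    intro m hm
    rcases mem_insert.mp hm with rfl | hmL
    · exact dominant_of_not_le_mlcm_erase (by rwa [erase_insert hnL])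
    · exact (hdom m (hDG hm) (ne_of_mem_erase (hL hmL))).mono hDG
  have hcard_le := hub (insert n L) hDG (mem_insert_self n L) hDdom
  rw [card_insert_of_notMem hnL] at hcard_le
  omega

theorem pd_semidominant (G : Finset (X →₀ ℕ)) (n : X →₀ ℕ) (hn : n ∈ G)
    (hnd : ¬ Dominant G n) (hdom : ∀ m ∈ G, m ≠ n → Dominant G m)
    (r : ℕ)
    (hub : ∀ D ⊆ G, n ∈ D → (∀ m ∈ D, Dominant D m) → D.card ≤ r)
    (hmax : ∃ D ⊆ G, n ∈ D ∧ (∀ m ∈ D, Dominant D m) ∧ D.card = r) :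
    ∀ L ⊆ G.erase n, r ≤ L.card → n ≤ mlcm L :=
  pd_semidominant_general G n hn hdom r hub
end
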